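/- Combining the previous bounds: if a plane tiling by pairwise non-overlapping convex tiles, each of area at least A and diameter at most D, has a connected dual graph in which the ball of radius i around a fixed vertex contains at least ((C+6)/2)·i² − K·i vertices for all large i (for some constant K), then C ≤ 2πD²/A − 6. -/
import Mathlib


open MeasureTheory

theorem stmt_6 {V : Type*} (G : SimpleGraph V) (hconn : G.Connected)
    (tile : V → Set (EuclideanSpace ℝ (Fin 2)))
    (A D C K : ℝ) (hA : 0 < A) (hD : 0 < D)
    (hconv : ∀ v, Convex ℝ (tile v))
    (hmeas : ∀ v, MeasurableSet (tile v))
    (hdisj : Pairwise fun u v => interior (tile u) ∩ interior (tile v) = ∅)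
    (harea : ∀ v, ENNReal.ofReal A ≤ volume (tile v))
    (hdiam : ∀ v, EMetric.diam (tile v) ≤ ENNReal.ofReal D)
    (hadj : ∀ u v, G.Adj u v → (tile u ∩ tile v).Nonempty)
    (o : V)
    (hball : ∃ N : ℕ, ∀ i : ℕ, N ≤ i →
      (C + 6) / 2 * (i : ℝ) ^ 2 - K * i ≤ ({v : V | G.dist o v ≤ i}.ncard : ℝ)) :
    C ≤ 2 * Real.pi * D ^ 2 / A - 6 := by
  classical
  -- a base point in tile o
  have h0 : (tile o).Nonempty := by
    refine MeasureTheory.nonempty_of_measure_ne_zero (μ := volume) fun h => ?_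
    have h2 := harea o
    rw [h, le_zero_iff] at h2
    exact (ENNReal.ofReal_pos.mpr hA).ne' h2
  obtain ⟨x₀, hx₀⟩ := h0
  -- points in a single tile are within distance D
  have hdst : ∀ v, ∀ x ∈ tile v, ∀ y ∈ tile v, dist x y ≤ D := by
    intro v x hx y hy
    have h1 : edist x y ≤ ENNReal.ofReal D :=
      le_trans (EMetric.edist_le_diam_of_mem hx hy) (hdiam v)
    rw [edist_dist] at h1
    exact (ENNReal.ofReal_le_ofReal_iff hD.le).mp h1
  -- tiles along a walk stay in a ball
  have hwalk : ∀ (u v : V) (p : G.Walk u v), ∀ x ∈ tile u,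
      tile v ⊆ Metric.closedBall x (((p.length : ℝ) + 1) * D) := by
    intro u v p
    induction p with
    | nil =>
      intro x hx z hz
      rw [Metric.mem_closedBall]
      have := hdst _ z hz x hx
      simpa using this.trans (by nlinarith)
    | @cons a b c h q ih =>
      intro x hx z hz
      obtain ⟨y, hy1, hy2⟩ := hadj _ _ h
      have hz' := ih y hy2 hz
      rw [Metric.mem_closedBall] at hz' ⊢
      have h2 : dist y x ≤ D := hdst _ y hy1 x hx
      have h3 : dist z x ≤ dist z y + dist y x := dist_triangle _ _ _
      have hlen : ((SimpleGraph.Walk.cons h q).length : ℝ) = (q.length : ℝ) + 1 := by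
        simp [SimpleGraph.Walk.length_cons]
      rw [hlen]
      nlinarith [dist_nonneg (x := z) (y := y)]
  -- tiles of vertices at graph distance ≤ i lie in a ball of radius (i+1)D
  have hsub : ∀ (i : ℕ) (v : V), G.dist o v ≤ i →
      tile v ⊆ Metric.closedBall x₀ (((i : ℝ) + 1) * D) := by
    intro i v hv
    obtain ⟨p, hp⟩ := hconn.exists_walk_length_eq_dist o v
    refine (hwalk o v p x₀ hx₀).trans (Metric.closedBall_subset_closedBall ?_)
    have : (p.length : ℝ) ≤ i := by exact_mod_cast hp ▸ hv
    nlinarith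
  -- volume of interior equals at least A
  have hvol : ∀ v, ENNReal.ofReal A ≤ volume (interior (tile v)) := by
    intro v
    have hfr : volume (frontier (tile v)) = 0 := (hconv v).addHaar_frontier volume
    refine le_trans (harea v) ?_
    calc volume (tile v) ≤ volume (closure (tile v)) := measure_mono subset_closure
      _ ≤ volume (interior (tile v) ∪ frontier (tile v)) := by
          refine measure_mono ?_
          intro z hz
          by_cases h : z ∈ interior (tile v)
          · exact Or.inl h
          · exact Or.inr ⟨hz, h⟩
      _ ≤ volume (interior (tile v)) + volume (frontier (tile v)) := measure_union_le _ _
      _ = volume (interior (tile v)) := by rw [hfr, add_zero]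
  -- volume of the closed ball of radius r
  have hvb : ∀ r : ℝ, 0 ≤ r → volume (Metric.closedBall x₀ r)
      = ENNReal.ofReal (Real.pi * r ^ 2) := by
    intro r hr
    rw [EuclideanSpace.volume_closedBall]
    have hcard : Fintype.card (Fin 2) = 2 := by simp
    rw [hcard]
    rw [show ((2 : ℕ) : ℝ) / 2 + 1 = 2 by norm_num]
    rw [Real.Gamma_two]
    rw [show Real.sqrt Real.pi ^ 2 / 1 = Real.pi by
      rw [div_one, Real.sq_sqrt Real.pi_pos.le]]
    rw [← ENNReal.ofReal_pow hr, ← ENNReal.ofReal_mul (by positivity)]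
    ring_nf
  -- counting: any finset of vertices at distance ≤ i has bounded size
  have hcount : ∀ (i : ℕ) (t : Finset V), (∀ v ∈ t, G.dist o v ≤ i) →
      (t.card : ℝ) * A ≤ Real.pi * (((i : ℝ) + 1) * D) ^ 2 := by
    intro i t ht
    have hdisj' : (t : Set V).PairwiseDisjoint fun v => interior (tile v) := by
      intro a _ b _ hab
      exact Set.disjoint_iff_inter_eq_empty.mpr (hdisj hab)
    have hsum : ∑ v ∈ t, volume (interior (tile v)) = volume (⋃ v ∈ t, interior (tile v)) :=
      (measure_biUnion_finset hdisj' fun v _ => isOpen_interior.measurableSet).symm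
    have hr : (0 : ℝ) ≤ ((i : ℝ) + 1) * D := by positivity
    have hunion : (⋃ v ∈ t, interior (tile v)) ⊆ Metric.closedBall x₀ (((i : ℝ) + 1) * D) := by
      intro z hz
      simp only [Set.mem_iUnion] at hz
      obtain ⟨v, hv, hz⟩ := hz
      exact hsub i v (ht v hv) (interior_subset hz)
    have h1 : (t.card : ENNReal) * ENNReal.ofReal A ≤
        volume (Metric.closedBall x₀ (((i : ℝ) + 1) * D)) := by
      calc (t.card : ENNReal) * ENNReal.ofReal A = ∑ _v ∈ t, ENNReal.ofReal A := by
            rw [Finset.sum_const, nsmul_eq_mul]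
        _ ≤ ∑ v ∈ t, volume (interior (tile v)) := Finset.sum_le_sum fun v _ => hvol v
        _ = volume (⋃ v ∈ t, interior (tile v)) := hsum
        _ ≤ _ := measure_mono hunion
    rw [hvb _ hr] at h1
    have h2 : ENNReal.ofReal ((t.card : ℝ) * A) ≤
        ENNReal.ofReal (Real.pi * (((i : ℝ) + 1) * D) ^ 2) := by
      rw [ENNReal.ofReal_mul (by positivity), ENNReal.ofReal_natCast]
      exact h1
    exact (ENNReal.ofReal_le_ofReal_iff (by positivity)).mp h2
  -- the balls in the graph are finite
  have hfin : ∀ i : ℕ, {v : V | G.dist o v ≤ i}.Finite := by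
    intro i
    rw [← Set.not_infinite]
    intro h
    obtain ⟨n, hn⟩ := exists_nat_gt (Real.pi * (((i : ℝ) + 1) * D) ^ 2 / A)
    obtain ⟨s, hss, hsf, hsc⟩ := h.exists_subset_ncard_eq n
    have := hcount i hsf.toFinset (by
      intro v hv
      have : v ∈ s := by simpa using hv
      exact hss this)
    rw [Set.ncard_eq_toFinset_card s hsf] at hsc
    rw [hsc] at this
    rw [div_lt_iff₀ hA] at hn
    linarith
  -- ncard bound
  have hnb : ∀ i : ℕ, ({v : V | G.dist o v ≤ i}.ncard : ℝ) * A
      ≤ Real.pi * (((i : ℝ) + 1) * D) ^ 2 := by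
    intro i
    have hf := hfin i
    have := hcount i hf.toFinset (by intro v hv; simpa using hv)
    rwa [Set.ncard_eq_toFinset_card _ hf]
  obtain ⟨N, hN⟩ := hball
  set B : ℝ := Real.pi * D ^ 2 / A with hB
  have hBpos : 0 < B := by positivity
  -- main quadratic inequality for all i ≥ N
  have hmain : ∀ i : ℕ, N ≤ i → (C + 6) / 2 * (i : ℝ) ^ 2 - K * i ≤ B * ((i : ℝ) + 1) ^ 2 := by
    intro i hi
    have h1 := hN i hi
    have h2 := hnb i
    have h3 : ({v : V | G.dist o v ≤ i}.ncard : ℝ) ≤ B * ((i : ℝ) + 1) ^ 2 := by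
      rw [hB, div_mul_eq_mul_div, le_div_iff₀ hA]
      nlinarith
    linarith
  -- conclude
  by_contra hcon
  push_neg at hcon
  have hCB : B < (C + 6) / 2 := by
    rw [hB]
    have : 2 * Real.pi * D ^ 2 / A = 2 * (Real.pi * D ^ 2 / A) := by ring
    nlinarith [hcon]
  set ε : ℝ := (C + 6) / 2 - B with hε
  have hεpos : 0 < ε := by simp [hε]; linarith
  obtain ⟨m, hm⟩ := exists_nat_gt (max (N : ℝ) ((K + 3 * B) / ε))
  have hmN : N ≤ m := by
    have := (le_max_left (N : ℝ) _).trans_lt hm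
    exact_mod_cast this.le
  have hm1 : (1 : ℝ) ≤ (m : ℝ) := by
    have h01 : (0 : ℝ) ≤ (N : ℝ) := Nat.cast_nonneg N
    have := (le_max_left (N : ℝ) _).trans_lt hm
    have hm0 : 0 < m := by exact_mod_cast h01.trans_lt this
    exact_mod_cast hm0
  have hm2 : (K + 3 * B) / ε < (m : ℝ) := (le_max_right _ _).trans_lt hm
  have h4 := hmain m hmN
  have hBm : B ≤ B * m := (le_mul_iff_one_le_right hBpos).mpr hm1
  have hm0 : (0 : ℝ) < m := by linarith
  have h5 : ε * (m : ℝ) ^ 2 ≤ (K + 3 * B) * m := by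
    have h5' : ((C + 6) / 2 - B) * (m : ℝ) ^ 2 ≤ (K + 3 * B) * m := by nlinarith [h4, hBm]
    rw [hε]; exact h5'
  rw [div_lt_iff₀ hεpos] at hm2
  have h6 := mul_lt_mul_of_pos_right hm2 hm0
  nlinarith [h5, h6]
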